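/- arXiv:2312.17625 — 5 statements merged into one kernel-verified Lean document; each statement's English description precedes it below -/
import Mathlib

section
/- Let N be a natural number, let α be a real number, and let d, c : ℕ → ℝ be arbitrary sequences. If ∑_{j=0}^{N} d(j) ≥ α · ∑_{j=0}^{N} c(j), then there exists a level i with 0 ≤ i ≤ N such that for every j with 0 ≤ j ≤ i one has ∑_{q=j}^{i} d(q) ≥ α · ∑_{q=j}^{i} c(q). -/
/-!
With prefix sums `P k = ∑_{q < k} g q`, the block sum `∑_{q=j}^{i} g q` is `P (i+1) - P j`.
Take the first `i` with `P (i+1) ≥ 0` (it exists since `P (N+1) ≥ 0`): every earlier prefix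
sum `P j` with `1 ≤ j ≤ i` is negative and `P 0 = 0`, so all blocks ending at `i` are
nonnegative. Applied to `g = d - α c` this gives the critical level.
-/

open Finset

section

variable {M : Type*} [AddCommGroup M]

theorem Finset.sum_Icc_eq_sum_range_sub (g : ℕ → M) {j i : ℕ} (hji : j ≤ i + 1) :
    ∑ q ∈ Icc j i, g q = ∑ q ∈ range (i + 1), g q - ∑ q ∈ range j, g q := by
  rw [← Ico_add_one_right_eq_Icc, sum_Ico_eq_sub g hji]

variable [LinearOrder M] [IsOrderedAddMonoid M]

theorem exists_forall_sum_Icc_nonneg (g : ℕ → M) {N : ℕ}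
    (h : 0 ≤ ∑ q ∈ range (N + 1), g q) :
    ∃ i ≤ N, ∀ j ≤ i, 0 ≤ ∑ q ∈ Icc j i, g q := by
  classical
  have hex : ∃ i, 0 ≤ ∑ q ∈ range (i + 1), g q := ⟨N, h⟩
  refine ⟨Nat.find hex, Nat.find_min' hex h, fun j hj => ?_⟩
  rw [sum_Icc_eq_sum_range_sub g (by omega), sub_nonneg]
  have hfirst : 0 ≤ ∑ q ∈ range (Nat.find hex + 1), g q := Nat.find_spec hex
  rcases j with _ | k
  · simpa using hfirst
  · have hk : ∑ q ∈ range (k + 1), g q < 0 := not_le.mp (Nat.find_min hex hj)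
    exact hk.le.trans hfirst

end

/-- If the total dirt over levels 0..N is at least α times the total cost,
then there exists a critical level i ≤ N: every aggregated range [j, i]
satisfies the same domination. -/
theorem exists_critical_level (N : ℕ) (α : ℝ) (d c : ℕ → ℝ)
    (h : ∑ j ∈ Finset.range (N + 1), d j ≥ α * ∑ j ∈ Finset.range (N + 1), c j) :
    ∃ i ≤ N, ∀ j ≤ i,
      ∑ q ∈ Finset.Icc j i, d q ≥ α * ∑ q ∈ Finset.Icc j i, c q := by
  have hsum (s : Finset ℕ) : ∑ q ∈ s, (d q - α * c q) = ∑ q ∈ s, d q - α * ∑ q ∈ s, c q := by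
    rw [sum_sub_distrib, mul_sum]
  obtain ⟨i, hiN, hi⟩ := exists_forall_sum_Icc_nonneg (fun q => d q - α * c q) (N := N)
    (by rw [hsum, sub_nonneg]; exact h)
  refine ⟨i, hiN, fun j hj => ?_⟩
  have := hi j hj
  rwa [hsum, sub_nonneg] at this
end

section
/- Let ε > 0, set β = 1+ε, and let N be a natural number. Let D, C, L : ℕ → ℝ be sequences such that for every j with 0 ≤ j ≤ N: D(j) ≥ 0, C(j) ≥ 0, 0 ≤ L(j) ≤ β^{j+2}·C(j), and the half-criticality condition ∑_{q=j}^{N} D(q) ≥ (ε/(2β)) · ∑_{q=j}^{N} C(q) holds. Then ∑_{j=0}^{N} L(j) ≤ (2β³/ε) · ∑_{j=0}^{N} β^{j}·D(j). -/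
/-- Combinatorial core of Lemma 4.3: if level N is half-critical, the tokens
(2β³/ε per leaving element, i.e. per β^j·D(j)) pay for all covered elements
L(j) ≤ β^{j+2}·C(j) at levels up to N. -/
theorem partial_reset_token_bound (ε : ℝ) (hε : 0 < ε) (β : ℝ) (hβ : β = 1 + ε)
    (N : ℕ) (D C L : ℕ → ℝ)
    (hD : ∀ j ≤ N, 0 ≤ D j) (hC : ∀ j ≤ N, 0 ≤ C j)
    (hL0 : ∀ j ≤ N, 0 ≤ L j) (hL : ∀ j ≤ N, L j ≤ β ^ (j + 2) * C j)
    (hcrit : ∀ j ≤ N,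
      ∑ q ∈ Finset.Icc j N, D q ≥ ε / (2 * β) * ∑ q ∈ Finset.Icc j N, C q) :
    ∑ j ∈ Finset.range (N + 1), L j ≤
      (2 * β ^ 3 / ε) * ∑ j ∈ Finset.range (N + 1), β ^ j * D j := by
  have hβ0 : 0 < β := by nlinarith
  have hβ1 : 1 ≤ β := by nlinarith
  set α := ε / (2 * β) with hαdef
  have hα0 : 0 < α := by positivity
  -- tail sums of D - α·C are nonnegative
  have hF : ∀ j ≤ N, 0 ≤ ∑ q ∈ Finset.Icc j N, (D q - α * C q) := by
    intro j hj
    have h := hcrit j hj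
    rw [Finset.sum_sub_distrib, ← Finset.mul_sum]
    linarith
  -- key Abel-type inequality, downward induction
  have key : ∀ k, k ≤ N →
      β ^ (N - k) * ∑ q ∈ Finset.Icc (N - k) N, (D q - α * C q) ≤
        ∑ q ∈ Finset.Icc (N - k) N, (β ^ q * D q - α * (β ^ q * C q)) := by
    intro k
    induction k with
    | zero =>
        intro _
        simp [Nat.sub_zero]
        ring_nf
        apply le_of_eq
        ring
    | succ k ih =>
        intro hk
        have hk' : k ≤ N := Nat.le_of_succ_le hk
        have hins : Finset.Icc (N - (k + 1)) N
            = insert (N - (k + 1)) (Finset.Icc (N - k) N) := by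
          ext x; simp; omega
        have hnm : N - (k + 1) ∉ Finset.Icc (N - k) N := by simp; omega
        rw [hins, Finset.sum_insert hnm, Finset.sum_insert hnm]
        have hih := ih hk'
        have hFk := hF (N - k) (Nat.sub_le _ _)
        have hpow : β ^ (N - (k + 1)) ≤ β ^ (N - k) :=
          pow_le_pow_right₀ hβ1 (by omega)
        have hpow0 : 0 ≤ β ^ (N - (k + 1)) := by positivity
        nlinarith [mul_le_mul_of_nonneg_right hpow hFk]
  -- specialize to j = 0
  have h0 := key N (le_refl N)
  simp only [Nat.sub_self] at h0
  have hIcc : Finset.Icc 0 N = Finset.range (N + 1) := by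
    ext x; simp [Nat.lt_succ_iff]
  rw [hIcc] at h0
  have hmain : α * ∑ j ∈ Finset.range (N + 1), β ^ j * C j ≤
      ∑ j ∈ Finset.range (N + 1), β ^ j * D j := by
    rw [Finset.sum_sub_distrib, ← Finset.mul_sum] at h0
    simp only [pow_zero, one_mul] at h0
    rw [Finset.sum_sub_distrib, ← Finset.mul_sum] at h0
    have hF0 := hF 0 (Nat.zero_le N)
    rw [hIcc, Finset.sum_sub_distrib, ← Finset.mul_sum] at hF0
    nlinarith
  -- chain the estimates
  have step1 : ∑ j ∈ Finset.range (N + 1), L j ≤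
      β ^ 2 * ∑ j ∈ Finset.range (N + 1), β ^ j * C j := by
    rw [Finset.mul_sum]
    apply Finset.sum_le_sum
    intro j hj
    have hjN : j ≤ N := Nat.lt_succ_iff.mp (Finset.mem_range.mp hj)
    calc L j ≤ β ^ (j + 2) * C j := hL j hjN
      _ = β ^ 2 * (β ^ j * C j) := by ring
  have hcoef : 2 * β ^ 3 / ε = β ^ 2 / α := by
    rw [hαdef]; field_simp
  rw [hcoef]
  calc ∑ j ∈ Finset.range (N + 1), L j
      ≤ β ^ 2 * ∑ j ∈ Finset.range (N + 1), β ^ j * C j := step1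
    _ ≤ β ^ 2 / α * ∑ j ∈ Finset.range (N + 1), β ^ j * D j := by
        rw [div_mul_eq_mul_div, le_div_iff₀ hα0]
        calc β ^ 2 * (∑ j ∈ Finset.range (N + 1), β ^ j * C j) * α
            = β ^ 2 * (α * ∑ j ∈ Finset.range (N + 1), β ^ j * C j) := by ring
          _ ≤ β ^ 2 * ∑ j ∈ Finset.range (N + 1), β ^ j * D j := by
              apply mul_le_mul_of_nonneg_left hmain (by positivity)
end

section
/- Let ε > 0, set β = 1+ε, and let N and m be natural numbers. Let D, C, P : ℕ → ℝ be sequences such that for every j with 0 ≤ j ≤ N: D(j) ≥ 0, C(j) ≥ 0, 0 ≤ P(j) ≤ β^{min(j,m)+2}·C(j), and the half-criticality condition ∑_{q=j}^{N} D(q) ≥ (ε/(2β)) · ∑_{q=j}^{N} C(q) holds. Then ∑_{j=0}^{N} P(j) ≤ (2β³/ε) · ∑_{j=0}^{N} β^{min(j,m)}·D(j). -/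
/-- Combinatorial core of Lemma 6.1 (recourse bound): if level N is half-critical,
the tokens (2β³/ε · β^{min(j,m)} per unit of dirt at level j) pay for all covering
sets P(j) ≤ β^{min(j,m)+2}·C(j) at levels up to N. -/
theorem recourse_token_bound (ε : ℝ) (hε : 0 < ε) (β : ℝ) (hβ : β = 1 + ε)
    (N m : ℕ) (D C P : ℕ → ℝ)
    (hD : ∀ j ≤ N, 0 ≤ D j) (hC : ∀ j ≤ N, 0 ≤ C j)
    (hP0 : ∀ j ≤ N, 0 ≤ P j) (hP : ∀ j ≤ N, P j ≤ β ^ (min j m + 2) * C j)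
    (hcrit : ∀ j ≤ N,
      ∑ q ∈ Finset.Icc j N, D q ≥ ε / (2 * β) * ∑ q ∈ Finset.Icc j N, C q) :
    ∑ j ∈ Finset.range (N + 1), P j ≤
      (2 * β ^ 3 / ε) * ∑ j ∈ Finset.range (N + 1), β ^ min j m * D j := by
  have hβpos : 0 < β := by rw [hβ]; linarith
  have hβ1 : 1 ≤ β := by rw [hβ]; linarith
  set w : ℕ → ℝ := fun j => β ^ min j m with hw
  have hwpos : ∀ j, 0 < w j := fun j => pow_pos hβpos _
  have hwmono : ∀ j, w j ≤ w (j + 1) := by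
    intro j
    exact pow_le_pow_right₀ hβ1 (min_le_min (Nat.le_succ j) le_rfl)
  set K : ℝ := 2 * β / ε with hK
  have hKpos : 0 < K := by positivity
  -- half-criticality in Ico form, valid up to N+1 (empty sums)
  have hcrit' : ∀ j ≤ N + 1,
      ∑ q ∈ Finset.Ico j (N + 1), C q ≤ K * ∑ q ∈ Finset.Ico j (N + 1), D q := by
    intro j hj
    rcases Nat.lt_or_ge j (N + 1) with hlt | hge
    · have hjN : j ≤ N := Nat.lt_succ_iff.mp hlt
      have h := hcrit j hjN
      rw [← Finset.Ico_add_one_right_eq_Icc] at h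
      have hεβ : (0:ℝ) < ε / (2 * β) := by positivity
      have : ε / (2 * β) * ∑ q ∈ Finset.Ico j (N + 1), C q ≤
          ε / (2 * β) * (K * ∑ q ∈ Finset.Ico j (N + 1), D q) := by
        have : ε / (2 * β) * (K * ∑ q ∈ Finset.Ico j (N + 1), D q)
            = ∑ q ∈ Finset.Ico j (N + 1), D q := by
          rw [hK]; field_simp
        rw [this]; exact h
      exact le_of_mul_le_mul_left this hεβ
    · have : Finset.Ico j (N + 1) = ∅ := Finset.Ico_eq_empty (by omega)
      simp [this]
  -- Abel-summation key inequality by downward induction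
  have key : ∀ d, d ≤ N + 1 →
      ∑ q ∈ Finset.Ico (N + 1 - d) (N + 1), w q * C q
        - w (N + 1 - d) * ∑ q ∈ Finset.Ico (N + 1 - d) (N + 1), C q
      ≤ K * (∑ q ∈ Finset.Ico (N + 1 - d) (N + 1), w q * D q
        - w (N + 1 - d) * ∑ q ∈ Finset.Ico (N + 1 - d) (N + 1), D q) := by
    intro d
    induction d with
    | zero => simp
    | succ d ih =>
      intro hd
      have ihd := ih (by omega)
      have hj1 : N + 1 - (d + 1) = N - d := by omega
      have hj2 : N + 1 - d = (N - d) + 1 := by omega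
      rw [hj2] at ihd
      rw [hj1]
      set j := N - d with hjdef
      have hlt : j < N + 1 := by omega
      have sC := Finset.sum_eq_sum_Ico_succ_bot hlt C
      have sD := Finset.sum_eq_sum_Ico_succ_bot hlt D
      have swC := Finset.sum_eq_sum_Ico_succ_bot hlt (fun q => w q * C q)
      have swD := Finset.sum_eq_sum_Ico_succ_bot hlt (fun q => w q * D q)
      rw [sC, sD, swC, swD]
      have htail := hcrit' (j + 1) (by omega)
      have hmono := hwmono j
      nlinarith [mul_le_mul_of_nonneg_left htail (sub_nonneg.mpr hmono)]
  have key0 := key (N + 1) le_rfl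
  simp only [Nat.sub_self] at key0
  have h0 := hcrit' 0 (by omega)
  have hw0 : (0:ℝ) ≤ w 0 := (hwpos 0).le
  have habel : ∑ q ∈ Finset.Ico 0 (N + 1), w q * C q ≤
      K * ∑ q ∈ Finset.Ico 0 (N + 1), w q * D q := by
    nlinarith [mul_le_mul_of_nonneg_left h0 hw0]
  -- finish: P j ≤ β² * (w j * C j)
  have hstep : ∑ j ∈ Finset.range (N + 1), P j ≤
      β ^ 2 * ∑ j ∈ Finset.Ico 0 (N + 1), w j * C j := by
    rw [Finset.mul_sum, ← Nat.Ico_zero_eq_range]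
    apply Finset.sum_le_sum
    intro j hj
    have hjN : j ≤ N := by
      simp only [Finset.mem_Ico] at hj; omega
    have := hP j hjN
    calc P j ≤ β ^ (min j m + 2) * C j := this
      _ = β ^ 2 * (w j * C j) := by rw [hw, pow_add]; ring
  calc ∑ j ∈ Finset.range (N + 1), P j
      ≤ β ^ 2 * ∑ j ∈ Finset.Ico 0 (N + 1), w j * C j := hstep
    _ ≤ β ^ 2 * (K * ∑ j ∈ Finset.Ico 0 (N + 1), w j * D j) := by
        apply mul_le_mul_of_nonneg_left habel (by positivity)
    _ = (2 * β ^ 3 / ε) * ∑ j ∈ Finset.range (N + 1), β ^ min j m * D j := by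
        rw [hK, ← Nat.Ico_zero_eq_range, hw]; ring
end

section
/- Let β > 1 and c > 0 be real numbers, let S be a nonempty finite set, and let l : S → ℤ be a level assignment such that for every integer L the number of elements e ∈ S with l(e) ≤ L is at most c·β^{L+3}. Then ∑_{e ∈ S} β^{−l(e)} ≤ β³·c·(ln |S| + 1). -/
/-!
Sort the elements of `S` by level. The element of rank `j` from the top has at least
`|S| - j + 1` elements of `S` at level at most its own, so the count hypothesis at its level
gives `β^{-l(e)} ≤ β³ c / (|S| - j + 1)`; summing yields `β³ c · H_{|S|} ≤ β³ c (ln |S| + 1)`.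
-/

open Finset

theorem Finset.sum_inv_card_filter_le_le_harmonic {ι κ : Type*} [LinearOrder κ] (l : ι → κ)
    (S : Finset ι) :
    ∑ e ∈ S, ((S.filter fun e' => l e' ≤ l e).card : ℝ)⁻¹ ≤ harmonic S.card := by
  classical
  induction S using Finset.induction_on_max_value l with
  | empty => simp
  | insert a s has hmax ih =>
    have hfilter_a : (insert a s).filter (fun e' => l e' ≤ l a) = insert a s :=
      filter_true_of_mem fun x hx => (mem_insert.mp hx).elim (fun h => h ▸ le_rfl) (hmax x)
    have hle : ∀ x ∈ s, (((insert a s).filter fun e' => l e' ≤ l x).card : ℝ)⁻¹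
        ≤ ((s.filter fun e' => l e' ≤ l x).card : ℝ)⁻¹ := fun x hx => by
      have hpos : 0 < (s.filter fun e' => l e' ≤ l x).card :=
        card_pos.mpr ⟨x, mem_filter.mpr ⟨hx, le_rfl⟩⟩
      gcongr
      exact subset_insert a s
    calc ∑ e ∈ insert a s, (((insert a s).filter fun e' => l e' ≤ l e).card : ℝ)⁻¹
        = ((s.card + 1 : ℕ) : ℝ)⁻¹
            + ∑ x ∈ s, (((insert a s).filter fun e' => l e' ≤ l x).card : ℝ)⁻¹ := by
          rw [sum_insert has, hfilter_a, card_insert_of_notMem has]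
      _ ≤ ((s.card + 1 : ℕ) : ℝ)⁻¹ + harmonic s.card := by
          gcongr
          exact (sum_le_sum hle).trans ih
      _ = harmonic (insert a s).card := by
          rw [card_insert_of_notMem has, harmonic_succ]
          push_cast
          ring

theorem zpow_neg_le_of_le_mul_zpow {β c N : ℝ} (hβ : 0 < β) (hN : 0 < N) (L : ℤ) (k : ℕ)
    (h : N ≤ c * β ^ (L + k)) : β ^ (-L) ≤ β ^ k * c * N⁻¹ := by
  rw [← div_eq_mul_inv, le_div_iff₀ hN]
  calc β ^ (-L) * N ≤ β ^ (-L) * (c * β ^ (L + k)) := by gcongr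
    _ = β ^ k * c := by
      rw [mul_left_comm, ← zpow_add₀ hβ.ne', neg_add_cancel_left, zpow_natCast, mul_comm]

theorem per_set_harmonic_bound_general {α : Type*} (β c : ℝ) (hβ : 1 < β) (hc : 0 < c)
    (S : Finset α) (l : α → ℤ)
    (hcount : ∀ L : ℤ, (((S.filter fun e => l e ≤ L)).card : ℝ) ≤ c * β ^ (L + 3)) :
    ∑ e ∈ S, β ^ (-(l e)) ≤ β ^ (3 : ℕ) * c * (Real.log S.card + 1) := by
  have hweight : ∀ e ∈ S, β ^ (-(l e))
      ≤ β ^ (3 : ℕ) * c * ((S.filter fun e' => l e' ≤ l e).card : ℝ)⁻¹ := fun e he => by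
    have hpos : 0 < (S.filter fun e' => l e' ≤ l e).card :=
      card_pos.mpr ⟨e, mem_filter.mpr ⟨he, le_rfl⟩⟩
    exact zpow_neg_le_of_le_mul_zpow (zero_lt_one.trans hβ) (by exact_mod_cast hpos) (l e) 3
      (hcount (l e))
  calc ∑ e ∈ S, β ^ (-(l e))
      ≤ β ^ (3 : ℕ) * c * ∑ e ∈ S, ((S.filter fun e' => l e' ≤ l e).card : ℝ)⁻¹ := by
        rw [mul_sum]
        exact sum_le_sum hweight
    _ ≤ β ^ (3 : ℕ) * c * (Real.log S.card + 1) := by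
        refine mul_le_mul_of_nonneg_left ?_ (by positivity)
        linarith [sum_inv_card_filter_le_le_harmonic l S, harmonic_le_one_add_log S.card]

/-- Per-set harmonic bound (Equation (22)): if for every level L the number of
elements of S at level ≤ L is at most c·β^{L+3}, then the total dual weight of S
is at most β³·c·(ln |S| + 1). -/
theorem per_set_harmonic_bound {α : Type*} (β c : ℝ) (hβ : 1 < β) (hc : 0 < c)
    (S : Finset α) (hS : S.Nonempty) (l : α → ℤ)
    (hcount : ∀ L : ℤ, (((S.filter fun e => l e ≤ L)).card : ℝ) ≤ c * β ^ (L + 3)) :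
    ∑ e ∈ S, β ^ (-(l e)) ≤ β ^ (3 : ℕ) * c * (Real.log S.card + 1) :=
  per_set_harmonic_bound_general β c hβ hc S l hcount
end

section
/- Let β > 1 and n ≥ 1 be real numbers, and let c', c'' > 0 and b, b' be real numbers such that c'' ≥ c'/n, c'' ≤ n·β^{−b}, and b' > log_β(1/(β·c')), where β^{−b} denotes the real power and log_β the real logarithm to base β. Then b − b' < 2·log_β(n) + 1. -/
/-- Arithmetic core of Lemma 4.9: the gap between the lowest pre-reset level b and
the lowest created level b' is less than 2·log_β n + 1. -/
theorem levels_scanned_bound (β n c' c'' b b' : ℝ) (hβ : 1 < β) (hn : 1 ≤ n)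
    (hc' : 0 < c') (hc'' : 0 < c'')
    (h1 : c'' ≥ c' / n) (h2 : c'' ≤ n * β ^ (-b))
    (h3 : b' > Real.logb β (1 / (β * c'))) :
    b - b' < 2 * Real.logb β n + 1 := by
  have hn0 : 0 < n := lt_of_lt_of_le one_pos hn
  have hβ0 : 0 < β := lt_trans one_pos hβ
  have hpow : (0:ℝ) < β ^ (-b) := Real.rpow_pos_of_pos hβ0 _
  have hkey : c' / (n * n) ≤ β ^ (-b) := by
    have : c' / n ≤ n * β ^ (-b) := le_trans h1 h2
    rw [div_le_iff₀ (by positivity)]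
    rw [div_le_iff₀ hn0] at this
    nlinarith
  have hlog : Real.logb β (c' / (n * n)) ≤ -b := by
    have := Real.logb_le_logb_of_le hβ (by positivity) hkey
    rwa [Real.logb_rpow hβ0 (ne_of_gt hβ)] at this
  have e1 : Real.logb β (c' / (n * n)) = Real.logb β c' - 2 * Real.logb β n := by
    rw [Real.logb_div (ne_of_gt hc') (by positivity), Real.logb_mul (ne_of_gt hn0) (ne_of_gt hn0)]
    ring
  have e2 : Real.logb β (1 / (β * c')) = -1 - Real.logb β c' := by
    rw [Real.logb_div one_ne_zero (by positivity), Real.logb_one,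
      Real.logb_mul (ne_of_gt hβ0) (ne_of_gt hc'), Real.logb_self_eq_one hβ]
    ring
  linarith [e1 ▸ hlog, e2 ▸ h3]
end
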